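/- arXiv:1608.04472 — 5 statements merged into one kernel-verified Lean document; each statement's English description precedes it below -/
import Mathlib

section
/- Let G = (V,E) be a finite connected simple graph and let s, v ∈ V with s ≠ v. Then the dependency of s on v satisfies the recursion δ_{s·}(v) = Σ_{t ∈ V : v ∈ P_s(t)} (σ_{sv}/σ_{st})·(1 + δ_{s·}(t)), where the sum ranges over all vertices t whose predecessor set P_s(t) contains v. -/
open Finset

variable {V : Type*}

/-- The number of shortest paths from `s` to `t` in `G`. -/
noncomputable def numShortestPaths [Fintype V] [DecidableEq V] (G : SimpleGraph V)
    [DecidableRel G.Adj] (s t : V) : ℕ :=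
  (G.finsetWalkLength (G.dist s t) s t).card

/-- The number of shortest paths from `s` to `t` in `G` passing through `v`. -/
noncomputable def numShortestPathsThrough [Fintype V] [DecidableEq V] (G : SimpleGraph V)
    [DecidableRel G.Adj] (s t v : V) : ℕ :=
  ((G.finsetWalkLength (G.dist s t) s t).filter (fun w => v ∈ w.support)).card

/-- The pair-dependency `δ_{st}(v) = σ_{st}(v) / σ_{st}`. -/
noncomputable def pairDependency [Fintype V] [DecidableEq V] (G : SimpleGraph V)
    [DecidableRel G.Adj] (s t v : V) : ℝ :=
  (numShortestPathsThrough G s t v : ℝ) / (numShortestPaths G s t : ℝ)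

/-- The dependency of a source `s` on a vertex `v`:
`δ_{s·}(v) = ∑_{t ∈ V, s ≠ t ≠ v} δ_{st}(v)`. -/
noncomputable def dependency [Fintype V] [DecidableEq V] (G : SimpleGraph V)
    [DecidableRel G.Adj] (s v : V) : ℝ :=
  ∑ t ∈ Finset.univ.filter (fun t => s ≠ t ∧ t ≠ v), pairDependency G s t v

/-- The predecessor set `P_s(u)` of `u` on shortest paths from `s`:
`w ∈ P_s(u)` iff `d(s,u) = d(s,w) + 1` and `w` is adjacent to `u`. -/
def predecessors (G : SimpleGraph V) [DecidableRel G.Adj] (s u : V) : Set V :=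
  {w : V | G.dist s u = G.dist s w + 1 ∧ G.Adj w u}

noncomputable instance (G : SimpleGraph V) [DecidableRel G.Adj] (s u w : V) :
    Decidable (w ∈ predecessors G s u) :=
  inferInstanceAs (Decidable (_ ∧ _))

section Aux
open SimpleGraph

lemma walk_append_inj {G : SimpleGraph V} {v t : V} :
    ∀ {s : V} (p p' : G.Walk s v) (q q' : G.Walk v t), p.length = p'.length →
      p.append q = p'.append q' → p = p' ∧ q = q'
  | s, Walk.nil, p', q, q', hl, he => by
    cases p' with
    | nil => simpa using he
    | cons h r => simp at hl
  | s, Walk.cons h r, p', q, q', hl, he => by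
    cases p' with
    | nil => simp at hl
    | cons h' r' =>
      simp only [Walk.cons_append] at he
      injection he with h1 h2 h3 h4
      subst h2
      simp only [heq_eq_eq] at h4
      simp only [Walk.length_cons, add_left_inj] at hl
      obtain ⟨rfl, rfl⟩ := walk_append_inj r r' q q' hl h4
      simp

lemma take_drop_len [DecidableEq V] {G : SimpleGraph V} {s t v : V} (w : G.Walk s t) (hv : v ∈ w.support)
    (hd : w.length = G.dist s v + G.dist v t) :
    (w.takeUntil v hv).length = G.dist s v ∧ (w.dropUntil v hv).length = G.dist v t := by
  have hsum := congrArg Walk.length (w.take_spec hv)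
  rw [Walk.length_append] at hsum
  have h1 := SimpleGraph.dist_le (w.takeUntil v hv)
  have h2 := SimpleGraph.dist_le (w.dropUntil v hv)
  omega

lemma numShortestPathsThrough_eq [Fintype V] [DecidableEq V] (G : SimpleGraph V)
    [DecidableRel G.Adj] (hG : G.Connected) (s t v : V) :
    numShortestPathsThrough G s t v =
      if G.dist s t = G.dist s v + G.dist v t then
        numShortestPaths G s v * numShortestPaths G v t else 0 := by
  split_ifs with hd
  · rw [numShortestPathsThrough, numShortestPaths, numShortestPaths, ← Finset.card_product]
    refine Finset.card_bij' (fun w hw => ((w.takeUntil v (Finset.mem_filter.mp hw).2),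
        (w.dropUntil v (Finset.mem_filter.mp hw).2)))
      (fun p _ => p.1.append p.2) ?_ ?_ ?_ ?_
    · intro w hw
      obtain ⟨hw1, hw2⟩ := Finset.mem_filter.mp hw
      have hlen := SimpleGraph.mem_finsetWalkLength_iff.mp hw1
      have h := take_drop_len w hw2 (by omega)
      simp [Finset.mem_product, SimpleGraph.mem_finsetWalkLength_iff, h.1, h.2]
    · intro p hp
      rw [Finset.mem_product] at hp
      have h1 := SimpleGraph.mem_finsetWalkLength_iff.mp hp.1
      have h2 := SimpleGraph.mem_finsetWalkLength_iff.mp hp.2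
      rw [Finset.mem_filter]
      constructor
      · rw [SimpleGraph.mem_finsetWalkLength_iff, Walk.length_append]
        omega
      · rw [Walk.mem_support_append_iff]
        exact Or.inl (Walk.end_mem_support _)
    · intro w hw
      exact w.take_spec _
    · intro p hp
      rw [Finset.mem_product] at hp
      have h1 := SimpleGraph.mem_finsetWalkLength_iff.mp hp.1
      have h2 := SimpleGraph.mem_finsetWalkLength_iff.mp hp.2
      have hv : v ∈ (p.1.append p.2).support := by
        rw [Walk.mem_support_append_iff]; exact Or.inl (Walk.end_mem_support _)
      have hlen : (p.1.append p.2).length = G.dist s v + G.dist v t := by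
        rw [Walk.length_append]; omega
      have h := take_drop_len (p.1.append p.2) hv hlen
      have := walk_append_inj ((p.1.append p.2).takeUntil v hv) p.1
        ((p.1.append p.2).dropUntil v hv) p.2 (by omega) (by rw [Walk.take_spec])
      exact Prod.ext this.1 this.2
  · rw [numShortestPathsThrough, Finset.card_eq_zero, Finset.eq_empty_iff_forall_notMem]
    intro w hw
    obtain ⟨hw1, hw2⟩ := Finset.mem_filter.mp hw
    have hlen := SimpleGraph.mem_finsetWalkLength_iff.mp hw1
    have hsum := congrArg Walk.length (w.take_spec hw2)
    rw [Walk.length_append] at hsum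
    have h1 := SimpleGraph.dist_le (w.takeUntil v hw2)
    have h2 := SimpleGraph.dist_le (w.dropUntil v hw2)
    have h3 := hG.dist_triangle (u := s) (v := v) (w := t)
    omega

lemma card_walkLength_eq_pow [Fintype V] [DecidableEq V] (G : SimpleGraph V)
    [DecidableRel G.Adj] (n : ℕ) (u v : V) :
    (G.finsetWalkLength n u v).card = (G.adjMatrix ℕ ^ n) u v := by
  rw [adjMatrix_pow_apply_eq_card_walk, card_set_walk_length_eq]
  simp

lemma card_walkLength_eq_zero [Fintype V] [DecidableEq V] (G : SimpleGraph V)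
    [DecidableRel G.Adj] {n : ℕ} {u v : V} (h : n < G.dist u v) :
    (G.finsetWalkLength n u v).card = 0 := by
  rw [Finset.card_eq_zero, Finset.eq_empty_iff_forall_notMem]
  intro w hw
  have := SimpleGraph.mem_finsetWalkLength_iff.mp hw
  have := SimpleGraph.dist_le w
  omega

lemma numShortestPaths_self [Fintype V] [DecidableEq V] (G : SimpleGraph V)
    [DecidableRel G.Adj] (t : V) : numShortestPaths G t t = 1 := by
  rw [numShortestPaths, SimpleGraph.dist_self]
  rw [show G.finsetWalkLength 0 t t = {Walk.nil} from ?_]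
  · simp
  · ext w
    rw [SimpleGraph.mem_finsetWalkLength_iff, Finset.mem_singleton]
    constructor
    · intro h
      cases w with
      | nil => rfl
      | cons h' q => simp at h
    · rintro rfl; rfl

lemma numShortestPaths_pos [Fintype V] [DecidableEq V] (G : SimpleGraph V)
    [DecidableRel G.Adj] (hG : G.Connected) (u v : V) : 0 < numShortestPaths G u v := by
  obtain ⟨w, hw⟩ := hG.exists_walk_length_eq_dist u v
  rw [numShortestPaths, Finset.card_pos]
  exact ⟨w, SimpleGraph.mem_finsetWalkLength_iff.mpr hw⟩

lemma firstStep [Fintype V] [DecidableEq V] (G : SimpleGraph V)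
    [DecidableRel G.Adj] (hG : G.Connected) {v u : V} (hvu : v ≠ u) :
    numShortestPaths G v u =
      ∑ t ∈ Finset.univ.filter (fun t => G.Adj v t ∧ G.dist t u + 1 = G.dist v u),
        numShortestPaths G t u := by
  have hd : 0 < G.dist v u := hG.pos_dist_of_ne hvu
  obtain ⟨n, hn⟩ : ∃ n, G.dist v u = n + 1 := ⟨G.dist v u - 1, by omega⟩
  rw [numShortestPaths, card_walkLength_eq_pow, hn, pow_succ', Matrix.mul_apply]
  rw [Finset.sum_congr rfl (fun t _ => by rw [SimpleGraph.adjMatrix_apply, ite_mul, one_mul, zero_mul])]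
  rw [Finset.sum_ite, Finset.sum_const_zero, add_zero]
  rw [Finset.sum_filter, Finset.sum_filter]
  apply Finset.sum_congr rfl
  intro t _
  by_cases hadj : G.Adj v t
  · rw [if_pos hadj]
    have hvt1 : G.dist v t ≤ 1 := by simpa using SimpleGraph.dist_le (Walk.cons hadj Walk.nil)
    have h1 : G.dist v u ≤ G.dist v t + G.dist t u := hG.dist_triangle
    by_cases hdist : G.dist t u + 1 = n + 1
    · rw [if_pos ⟨hadj, hdist⟩, ← card_walkLength_eq_pow, numShortestPaths]
      have hh : G.dist t u = n := by omega
      rw [hh]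
    · rw [if_neg (by tauto), ← card_walkLength_eq_pow]
      exact card_walkLength_eq_zero G (by omega)
  · rw [if_neg hadj, if_neg (by tauto)]

lemma pairDependency_eq [Fintype V] [DecidableEq V] (G : SimpleGraph V)
    [DecidableRel G.Adj] (hG : G.Connected) (a b c : V) :
    pairDependency G a b c =
      if G.dist a b = G.dist a c + G.dist c b then
        (numShortestPaths G a c : ℝ) * (numShortestPaths G c b : ℝ) /
          (numShortestPaths G a b : ℝ)
      else 0 := by
  rw [pairDependency, numShortestPathsThrough_eq G hG]
  split_ifs with h
  · push_cast; ring
  · simp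

lemma dependency_eq [Fintype V] [DecidableEq V] (G : SimpleGraph V)
    [DecidableRel G.Adj] (hG : G.Connected) (a c : V) :
    dependency G a c = ∑ b ∈ Finset.univ,
      if a ≠ b ∧ b ≠ c ∧ G.dist a b = G.dist a c + G.dist c b then
        (numShortestPaths G a c : ℝ) * (numShortestPaths G c b : ℝ) /
          (numShortestPaths G a b : ℝ)
      else 0 := by
  rw [dependency, Finset.sum_filter]
  refine Finset.sum_congr rfl fun b _ => ?_
  rw [pairDependency_eq G hG]
  split_ifs <;> first | rfl | tauto

end Aux

open SimpleGraph in
theorem brandes_dependency_recursion [Fintype V] [DecidableEq V] (G : SimpleGraph V)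
    [DecidableRel G.Adj] (hG : G.Connected) (s v : V) (hsv : s ≠ v) :
    dependency G s v =
      ∑ t ∈ Finset.univ.filter (fun t => v ∈ predecessors G s t),
        ((numShortestPaths G s v : ℝ) / (numShortestPaths G s t : ℝ)) *
          (1 + dependency G s t) := by
  classical
  have hσpos : ∀ x y : V, (0:ℝ) < (numShortestPaths G x y : ℝ) := fun x y => by
    exact_mod_cast numShortestPaths_pos G hG x y
  have hσne : ∀ x y : V, (numShortestPaths G x y : ℝ) ≠ 0 := fun x y => (hσpos x y).ne'
  have hadj1 : ∀ {x y : V}, G.Adj x y → G.dist x y ≤ 1 := fun h => by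
    simpa using SimpleGraph.dist_le (Walk.cons h Walk.nil)
  have hdistnz : ∀ {x y : V}, G.dist x y ≠ 0 → x ≠ y := by
    rintro x y h rfl
    simp [SimpleGraph.dist_self] at h
  have hCD : ∀ t u : V,
      ((s ≠ u ∧ u ≠ v ∧ G.dist s u = G.dist s v + G.dist v u) ∧
        G.Adj v t ∧ G.dist t u + 1 = G.dist v u) ↔
      (v ∈ predecessors G s t ∧ G.dist s u = G.dist s t + G.dist t u) := by
    intro t u
    constructor
    · rintro ⟨⟨hsu, huv, hdu⟩, hadj, hdt⟩
      have T1 : G.dist s t ≤ G.dist s v + G.dist v t := hG.dist_triangle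
      have T2 : G.dist s u ≤ G.dist s t + G.dist t u := hG.dist_triangle
      have hvt := hadj1 hadj
      exact ⟨⟨by omega, hadj⟩, by omega⟩
    · rintro ⟨⟨hpred, hadj⟩, hdu⟩
      have T3 : G.dist v u ≤ G.dist v t + G.dist t u := hG.dist_triangle
      have T4 : G.dist s u ≤ G.dist s v + G.dist v u := hG.dist_triangle
      have hvt := hadj1 hadj
      have hsu : s ≠ u := hdistnz (by omega)
      have huv : u ≠ v := by
        rintro rfl; omega
      exact ⟨⟨hsu, huv, by omega⟩, hadj, by omega⟩
  -- LHS as a double sum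
  have LHS3 : dependency G s v = ∑ u ∈ Finset.univ, ∑ t ∈ Finset.univ,
      if ((s ≠ u ∧ u ≠ v ∧ G.dist s u = G.dist s v + G.dist v u) ∧
          G.Adj v t ∧ G.dist t u + 1 = G.dist v u) then
        (numShortestPaths G s v : ℝ) * (numShortestPaths G t u : ℝ) /
          (numShortestPaths G s u : ℝ)
      else 0 := by
    rw [dependency_eq G hG]
    refine Finset.sum_congr rfl fun u _ => ?_
    by_cases hC : s ≠ u ∧ u ≠ v ∧ G.dist s u = G.dist s v + G.dist v u
    · rw [if_pos hC]
      have hvu : v ≠ u := fun h => hC.2.1 h.symm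
      have hfs := firstStep G hG hvu
      have hcast : (numShortestPaths G v u : ℝ) =
          ∑ t ∈ Finset.univ.filter (fun t => G.Adj v t ∧ G.dist t u + 1 = G.dist v u),
            (numShortestPaths G t u : ℝ) := by exact_mod_cast hfs
      rw [hcast, Finset.mul_sum, Finset.sum_div, Finset.sum_filter]
      refine Finset.sum_congr rfl fun t _ => ?_
      split_ifs <;> first | rfl | tauto
    · rw [if_neg hC]
      symm
      apply Finset.sum_eq_zero
      intro t _
      rw [if_neg (by tauto)]
  rw [LHS3, Finset.sum_comm, Finset.sum_filter]
  refine Finset.sum_congr rfl fun t _ => ?_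
  by_cases hpred : v ∈ predecessors G s t
  · rw [if_pos hpred]
    obtain ⟨hdst, hadjvt⟩ := hpred
    have hdstpos : G.dist s t ≠ 0 := by omega
    -- rewrite inner condition via hCD
    rw [show (∑ u ∈ Finset.univ,
        if ((s ≠ u ∧ u ≠ v ∧ G.dist s u = G.dist s v + G.dist v u) ∧
            G.Adj v t ∧ G.dist t u + 1 = G.dist v u) then
          (numShortestPaths G s v : ℝ) * (numShortestPaths G t u : ℝ) /
            (numShortestPaths G s u : ℝ) else 0) =
        ∑ u ∈ Finset.univ,
        if (G.dist s u = G.dist s t + G.dist t u) then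
          (numShortestPaths G s v : ℝ) * (numShortestPaths G t u : ℝ) /
            (numShortestPaths G s u : ℝ) else 0 from
      Finset.sum_congr rfl fun u _ => by
        rw [if_congr ((hCD t u).trans (and_iff_right ⟨hdst, hadjvt⟩)) rfl rfl]]
    -- split off u = t
    rw [← Finset.add_sum_erase _ _ (Finset.mem_univ t)]
    rw [dependency_eq G hG, mul_add, mul_one, Finset.mul_sum]
    congr 1
    · rw [if_pos (by simp [SimpleGraph.dist_self]), numShortestPaths_self]
      push_cast
      ring
    · rw [← Finset.sum_erase (s := Finset.univ) (a := t)
        (by rw [if_neg (by tauto), mul_zero])]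
      refine Finset.sum_congr rfl fun u hu => ?_
      have hut : u ≠ t := (Finset.mem_erase.mp hu).1
      by_cases hcond : G.dist s u = G.dist s t + G.dist t u
      · have hsu : s ≠ u := hdistnz (by omega)
        rw [if_pos hcond,
          if_pos (show s ≠ u ∧ u ≠ t ∧ G.dist s u = G.dist s t + G.dist t u from
            ⟨hsu, hut, hcond⟩)]
        have key : ∀ a b c d : ℝ, b ≠ 0 → a / b * (b * c / d) = a * c / d := by
          intro a b c d hb
          rw [div_mul_div_comm, mul_comm b c, ← mul_assoc, mul_comm b d,
            mul_div_mul_right _ _ hb]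
        exact (key _ _ _ _ (hσne s t)).symm
      · rw [if_neg hcond,
          if_neg (show ¬(s ≠ u ∧ u ≠ t ∧ G.dist s u = G.dist s t + G.dist t u) from by tauto),
          mul_zero]
  · rw [if_neg hpred]
    apply Finset.sum_eq_zero
    intro u _
    rw [if_neg]
    intro h
    exact hpred ((hCD t u).mp h).1
end

section
/- Let (Ω, ℱ, ℙ) be a probability space, let n ≥ 2 be an integer, and let A be a real number with 0 < A ≤ n². Let ε and c be real numbers with 0 < ε < c, and let k be a natural number with (k : ℝ) = ε·(n²/A)^{2/3}. Let X_1, …, X_k be real-valued square-integrable random variables on Ω, each with mean E[X_i] = A/n and variance Var[X_i] = (n−1)A²/(n²(n+1)). Then ℙ[ Σ_{i=1}^k X_i ≥ c·n ] ≤ ε³/(c − ε)². -/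
open MeasureTheory ProbabilityTheory

/-! Chebyshev's inequality for `S = ∑ i, X i`. Without independence, `2 cov[X, Y] ≤ Var[X] + Var[Y]`
still gives `Var[S] ≤ k² σ² ≤ k² A² / n²`. The choice of `k` makes `k³ A² = ε³ n⁴`, and `k ≥ 1`
as a positive integer, so `Var[S] ≤ ε³ n²`. Since `(n² / A)^(2/3) ≤ n² / A`, also
`E[S] = k A / n ≤ ε n`, so the deviation `c n - E[S]` is at least `(c - ε) n`. -/

namespace ProbabilityTheory

variable {Ω ι : Type*} {m : MeasurableSpace Ω} {μ : Measure Ω} [IsFiniteMeasure μ]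

lemma two_mul_covariance_le_variance_add_variance {X Y : Ω → ℝ} (hX : MemLp X 2 μ)
    (hY : MemLp Y 2 μ) : 2 * cov[X, Y; μ] ≤ Var[X; μ] + Var[Y; μ] := by
  have h := variance_nonneg (X - Y) μ
  rw [variance_sub hX hY] at h
  linarith

lemma variance_sum_le_card_mul_sum_variance {s : Finset ι} {X : ι → Ω → ℝ}
    (hX : ∀ i ∈ s, MemLp (X i) 2 μ) :
    Var[fun ω ↦ ∑ i ∈ s, X i ω; μ] ≤ s.card * ∑ i ∈ s, Var[X i; μ] := by
  rw [variance_fun_sum' hX]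
  calc ∑ i ∈ s, ∑ j ∈ s, cov[X i, X j; μ]
      ≤ ∑ i ∈ s, ∑ j ∈ s, (Var[X i; μ] + Var[X j; μ]) / 2 := by
        gcongr with i hi j hj
        linarith [two_mul_covariance_le_variance_add_variance (hX i hi) (hX j hj)]
    _ = s.card * ∑ i ∈ s, Var[X i; μ] := by
        simp only [add_div, Finset.sum_add_distrib, Finset.sum_const, nsmul_eq_mul,
          ← Finset.sum_div, ← Finset.mul_sum]
        ring

lemma variance_sum_le_card_sq_mul {s : Finset ι} {X : ι → Ω → ℝ}
    (hX : ∀ i ∈ s, MemLp (X i) 2 μ) {v : ℝ} (hv : ∀ i ∈ s, Var[X i; μ] ≤ v) :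
    Var[fun ω ↦ ∑ i ∈ s, X i ω; μ] ≤ s.card ^ 2 * v := calc
  _ ≤ s.card * ∑ i ∈ s, Var[X i; μ] := variance_sum_le_card_mul_sum_variance hX
  _ ≤ s.card * (s.card * v) := by
      gcongr
      exact (Finset.sum_le_sum hv).trans_eq (by simp)
  _ = s.card ^ 2 * v := by ring

lemma meas_ge_le_variance_div_sq_of_lt {X : Ω → ℝ} (hX : MemLp X 2 μ) {t : ℝ} (ht : μ[X] < t) :
    μ {ω | t ≤ X ω} ≤ ENNReal.ofReal (Var[X; μ] / (t - μ[X]) ^ 2) := by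
  refine (measure_mono fun ω (hω : t ≤ X ω) ↦ ?_).trans
    (meas_ge_le_variance_div_sq hX (sub_pos.mpr ht))
  exact (sub_le_sub_right hω _).trans (le_abs_self _)

end ProbabilityTheory

namespace Real

lemma rpow_two_div_three_pow_three {x : ℝ} (hx : 0 ≤ x) :
    (x ^ ((2 : ℝ) / 3)) ^ 3 = x ^ 2 := by
  rw [← rpow_natCast, ← rpow_mul hx]
  norm_num

lemma mul_rpow_two_div_three_pow_three_mul_sq (ε : ℝ) {n A : ℝ} (hA : 0 < A) :
    (ε * (n ^ 2 / A) ^ ((2 : ℝ) / 3)) ^ 3 * A ^ 2 = ε ^ 3 * n ^ 4 := by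
  rw [mul_pow, rpow_two_div_three_pow_three (by positivity)]
  field_simp

lemma mul_rpow_two_div_three_mul_le {ε n A : ℝ} (hε : 0 ≤ ε) (hA0 : 0 < A) (hA : A ≤ n ^ 2) :
    ε * (n ^ 2 / A) ^ ((2 : ℝ) / 3) * A ≤ ε * n ^ 2 := by
  have hle : (n ^ 2 / A) ^ ((2 : ℝ) / 3) ≤ n ^ 2 / A :=
    rpow_le_self_of_one_le ((one_le_div hA0).mpr hA) (by norm_num)
  rw [mul_assoc]
  gcongr
  exact (le_div_iff₀ hA0).mp hle

end Real

theorem early_termination_probability_general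
    {Ω : Type*} [MeasureSpace Ω] [IsProbabilityMeasure (ℙ : Measure Ω)]
    (n : ℕ) (A : ℝ) (hA0 : 0 < A) (hA : A ≤ (n : ℝ) ^ 2)
    (ε c : ℝ) (hε : 0 < ε) (hεc : ε < c)
    (k : ℕ) (hk : (k : ℝ) = ε * ((n : ℝ) ^ 2 / A) ^ ((2 : ℝ) / 3))
    (X : Fin k → Ω → ℝ)
    (hL2 : ∀ i, MemLp (X i) 2 ℙ)
    (hmean : ∀ i, (∫ ω, X i ω ∂ℙ) = A / n)
    (hvar : ∀ i, variance (X i) ℙ =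
      ((n : ℝ) - 1) * A ^ 2 / ((n : ℝ) ^ 2 * ((n : ℝ) + 1))) :
    ℙ {ω | c * n ≤ ∑ i, X i ω} ≤ ENNReal.ofReal (ε ^ 3 / (c - ε) ^ 2) := by
  have hn : (0 : ℝ) < n := by nlinarith [(Nat.cast_nonneg n : (0 : ℝ) ≤ n)]
  have hkA : k * A ≤ ε * (n : ℝ) ^ 2 := hk ▸ Real.mul_rpow_two_div_three_mul_le hε.le hA0 hA
  have hk3 : (k : ℝ) ^ 3 * A ^ 2 = ε ^ 3 * (n : ℝ) ^ 4 :=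
    hk ▸ Real.mul_rpow_two_div_three_pow_three_mul_sq ε hA0
  have hk1 : 1 ≤ (k : ℝ) := by
    have hk0 : (0 : ℝ) < k := hk ▸ mul_pos hε (Real.rpow_pos_of_pos (by positivity) _)
    exact Nat.one_le_cast.mpr (Nat.cast_pos.mp hk0)
  have hvar_le : ∀ i, Var[X i; ℙ] ≤ A ^ 2 / (n : ℝ) ^ 2 := fun i ↦ by
    rw [hvar, div_le_div_iff₀ (by positivity) (by positivity)]
    nlinarith
  set S : Ω → ℝ := fun ω ↦ ∑ i, X i ω
  have hS : MemLp S 2 ℙ := memLp_finsetSum _ fun i _ ↦ hL2 i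
  have hES : ℙ[S] ≤ ε * n := by
    simp only [S, integral_finsetSum _ fun i _ ↦ (hL2 i).integrable one_le_two, hmean,
      Finset.sum_const, Finset.card_univ, Fintype.card_fin, nsmul_eq_mul]
    rw [← mul_div_assoc, div_le_iff₀ hn]
    nlinarith
  have hVS : Var[S; ℙ] ≤ ε ^ 3 * (n : ℝ) ^ 2 := calc
    Var[S; ℙ] ≤ k ^ 2 * (A ^ 2 / (n : ℝ) ^ 2) := by
      simpa using variance_sum_le_card_sq_mul (fun i _ ↦ hL2 i) (s := .univ) fun i _ ↦ hvar_le i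
    _ ≤ k ^ 3 * (A ^ 2 / (n : ℝ) ^ 2) := by gcongr; norm_num
    _ = ε ^ 3 * (n : ℝ) ^ 2 := by rw [← mul_div_assoc, hk3]; field_simp
  calc ℙ {ω | c * n ≤ S ω}
      ≤ ENNReal.ofReal (Var[S; ℙ] / (c * n - ℙ[S]) ^ 2) :=
        meas_ge_le_variance_div_sq_of_lt hS (by nlinarith)
    _ ≤ ENNReal.ofReal (ε ^ 3 * (n : ℝ) ^ 2 / ((c - ε) * n) ^ 2) := by
        gcongr
        all_goals nlinarith
    _ = ENNReal.ofReal (ε ^ 3 / (c - ε) ^ 2) := by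
        congr 1
        field_simp

theorem early_termination_probability
    {Ω : Type*} [MeasureSpace Ω] [IsProbabilityMeasure (ℙ : Measure Ω)]
    (n : ℕ) (hn : 2 ≤ n) (A : ℝ) (hA0 : 0 < A) (hA : A ≤ (n : ℝ) ^ 2)
    (ε c : ℝ) (hε : 0 < ε) (hεc : ε < c)
    (k : ℕ) (hk : (k : ℝ) = ε * ((n : ℝ) ^ 2 / A) ^ ((2 : ℝ) / 3))
    (X : Fin k → Ω → ℝ)
    (hmeas : ∀ i, Measurable (X i))
    (hL2 : ∀ i, MemLp (X i) 2 ℙ)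
    (hmean : ∀ i, (∫ ω, X i ω ∂ℙ) = A / n)
    (hvar : ∀ i, variance (X i) ℙ =
      ((n : ℝ) - 1) * A ^ 2 / ((n : ℝ) ^ 2 * ((n : ℝ) + 1))) :
    ℙ {ω | c * n ≤ ∑ i, X i ω} ≤ ENNReal.ofReal (ε ^ 3 / (c - ε) ^ 2) :=
  early_termination_probability_general n A hA0 hA ε c hε hεc k hk X hL2 hmean hvar
end

section
/- Let (Ω, ℱ, ℙ) be a probability space, let n ≥ 2 be an integer, and let A be a real number with 0 < A ≤ n²; set t = n²/A (so t ≥ 1). Let ε be a real number with 0 < ε < 1/2, and set d = 1/(ε·t^{1/3}). Let k₀ and k be natural numbers with (k₀ : ℝ) = ε·t^{2/3} and k ≥ k₀. Let X_1, X_2, … be independent identically distributed square-integrable real-valued random variables on Ω, each with mean E[X_i] = A/n and variance Var[X_i] = (n−1)A²/(n²(n+1)). Then the probability of the event that Σ_{i=1}^{k₀} X_i ≥ n or |(n/k)·Σ_{i=1}^{k} X_i − A| ≥ d·A is at most 2ε. In particular, with probability at least 1 − 2ε the algorithm (with threshold parameter c = 1) estimates A = BC(v) within a factor of 1/(ε·t^{1/3})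 using ε·t^{2/3} samples. -/
/-!
Both failure events are handled by Chebyshev's inequality for the partial sums
`S m = ∑ i < m, X i`, whose variance is at most `m (A/n)²` by pairwise independence.
Put `p = t^(1/3)`, so that `A = n²/p³`, `k₀ = ε p²` and `d = 1/(ε p)`. Then `E S k₀ = ε n / p`,
and `ℙ(S k₀ ≥ n) ≤ ε / (p (p - ε))² ≤ ε`, because `k₀ ≥ 1` and `ε < 1/2` force `p (p - ε) ≥ 1`.
The estimate `n S k / k` has variance at most `A²/k`, so it misses `A` by `d A` with probability
at most `1/(k d²) = ε² p² / k ≤ ε`.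
-/

open MeasureTheory ProbabilityTheory

namespace ProbabilityTheory

variable {Ω : Type*} {mΩ : MeasurableSpace Ω} {μ : Measure Ω} {X : ℕ → Ω → ℝ} {a σ : ℝ}

lemma variance_sum_range_le (hL2 : ∀ i, MemLp (X i) 2 μ)
    (hindep : Pairwise fun i j => IndepFun (X i) (X j) μ)
    (hvar : ∀ i, variance (X i) μ ≤ σ ^ 2) (n : ℕ) :
    variance (∑ i ∈ Finset.range n, X i) μ ≤ n * σ ^ 2 := by
  rw [IndepFun.variance_sum (fun i _ => hL2 i) (fun i _ j _ hij => hindep hij)]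
  simpa using Finset.sum_le_sum fun i (_ : i ∈ Finset.range n) => hvar i

variable [IsFiniteMeasure μ]

lemma meas_abs_sum_range_sub_ge_le (hL2 : ∀ i, MemLp (X i) 2 μ)
    (hindep : Pairwise fun i j => IndepFun (X i) (X j) μ) (hmean : ∀ i, μ[X i] = a)
    (hvar : ∀ i, variance (X i) μ ≤ σ ^ 2) (n : ℕ) {c : ℝ} (hc : 0 < c) :
    μ {ω | c ≤ |∑ i ∈ Finset.range n, X i ω - n * a|} ≤
      ENNReal.ofReal (n * σ ^ 2 / c ^ 2) := by
  have hS : MemLp (∑ i ∈ Finset.range n, X i) 2 μ := memLp_finsetSum' _ fun i _ => hL2 i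
  have hmeanS : ∫ ω, ∑ i ∈ Finset.range n, X i ω ∂μ = n * a := by
    rw [integral_finsetSum _ fun i _ => (hL2 i).integrable one_le_two]
    simp [hmean]
  calc _ ≤ ENNReal.ofReal (variance (∑ i ∈ Finset.range n, X i) μ / c ^ 2) := by
        simpa only [Finset.sum_apply, hmeanS] using meas_ge_le_variance_div_sq hS hc
    _ ≤ _ := ENNReal.ofReal_le_ofReal <|
        div_le_div_of_nonneg_right (variance_sum_range_le hL2 hindep hvar n) (sq_nonneg c)

lemma meas_sum_range_ge_le (hL2 : ∀ i, MemLp (X i) 2 μ)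
    (hindep : Pairwise fun i j => IndepFun (X i) (X j) μ) (hmean : ∀ i, μ[X i] = a)
    (hvar : ∀ i, variance (X i) μ ≤ σ ^ 2) {n : ℕ} {b : ℝ} (hb : n * a < b) :
    μ {ω | b ≤ ∑ i ∈ Finset.range n, X i ω} ≤
      ENNReal.ofReal (n * σ ^ 2 / (b - n * a) ^ 2) :=
  (measure_mono fun _ (hω : b ≤ _) => (sub_le_sub_right hω _).trans (le_abs_self _)).trans
    (meas_abs_sum_range_sub_ge_le hL2 hindep hmean hvar n (sub_pos.2 hb))

lemma meas_abs_div_mul_sum_range_sub_ge_le (hL2 : ∀ i, MemLp (X i) 2 μ)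
    (hindep : Pairwise fun i j => IndepFun (X i) (X j) μ) {b s : ℝ} (hs : s ≠ 0)
    (hmean : ∀ i, μ[X i] = b / s) (hvar : ∀ i, variance (X i) μ ≤ σ ^ 2)
    {k : ℕ} (hk : 0 < k) {δ : ℝ} (hδ : 0 < δ) :
    μ {ω | δ ≤ |s / k * ∑ i ∈ Finset.range k, X i ω - b|} ≤
      ENNReal.ofReal (s ^ 2 * σ ^ 2 / (k * δ ^ 2)) := by
  have hk' : (0 : ℝ) < k := by exact_mod_cast hk
  have hscale : ∀ x : ℝ, |s / k * x - b| = |s| / k * |x - k * (b / s)| := fun x => by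
    rw [show s / k * x - b = s / k * (x - k * (b / s)) by field_simp, abs_mul, abs_div,
      abs_of_pos hk']
  have hbound := meas_abs_sum_range_sub_ge_le hL2 hindep hmean hvar k
    (c := δ * k / |s|) (by positivity)
  convert hbound using 2
  · ext ω
    rw [Set.mem_ofPred_eq, Set.mem_ofPred_eq, hscale, div_le_iff₀ (abs_pos.2 hs),
      div_mul_eq_mul_div, le_div_iff₀ hk', mul_comm |s|]
  · field_simp
    rw [sq_abs]
    ring

end ProbabilityTheory

lemma one_le_mul_sub_of_one_le_mul_sq {ε p : ℝ} (hε : ε < 1 / 2) (hp : 0 < p)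
    (h : 1 ≤ ε * p ^ 2) : 1 ≤ p * (p - ε) := by
  nlinarith

lemma first_stage_bound {n A p ε k₀ : ℝ} (hn : 0 < n) (hp : 0 < p) (hε : 0 ≤ ε)
    (hA : A = n ^ 2 / p ^ 3) (hk₀ : k₀ = ε * p ^ 2) (h : 1 ≤ p * (p - ε)) :
    k₀ * (A / n) < n ∧ k₀ * (A / n) ^ 2 / (n - k₀ * (A / n)) ^ 2 ≤ ε := by
  have hpε : 0 < p - ε := by nlinarith
  subst hA hk₀
  have hgap : n - ε * p ^ 2 * (n ^ 2 / p ^ 3 / n) = n * (p - ε) / p := by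
    field_simp
  have hratio : ε * p ^ 2 * (n ^ 2 / p ^ 3 / n) ^ 2 / (n - ε * p ^ 2 * (n ^ 2 / p ^ 3 / n)) ^ 2
      = ε / (p * (p - ε)) ^ 2 := by
    rw [hgap]; field_simp
  exact ⟨sub_pos.1 (hgap ▸ by positivity), hratio ▸ div_le_self hε (one_le_pow₀ h)⟩

lemma second_stage_bound {n A p ε d k : ℝ} (hn : n ≠ 0) (hA : A ≠ 0) (hp : p ≠ 0)
    (hd : d = 1 / (ε * p)) (hε : 0 < ε) (hk : ε * p ^ 2 ≤ k) :
    n ^ 2 * (A / n) ^ 2 / (k * (d * A) ^ 2) ≤ ε := by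
  have hk0 : 0 < k := lt_of_lt_of_le (by positivity) hk
  have hratio : n ^ 2 * (A / n) ^ 2 / (k * (d * A) ^ 2) = ε * (ε * p ^ 2 / k) := by
    subst hd; field_simp
  rw [hratio]
  exact mul_le_of_le_one_right hε.le ((div_le_one hk0).2 hk)

theorem adaptive_sampling_main_c_one_general
    {Ω : Type*} [MeasureSpace Ω] [IsProbabilityMeasure (ℙ : Measure Ω)]
    (n : ℕ) (hn : 2 ≤ n) (A : ℝ) (hA0 : 0 < A)
    (t : ℝ) (ht : t = (n : ℝ) ^ 2 / A)
    (ε : ℝ) (hε0 : 0 < ε) (hε : ε < 1 / 2)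
    (d : ℝ) (hd : d = 1 / (ε * t ^ ((1 : ℝ) / 3)))
    (k₀ k : ℕ) (hk₀ : (k₀ : ℝ) = ε * t ^ ((2 : ℝ) / 3)) (hk : k₀ ≤ k)
    (X : ℕ → Ω → ℝ)
    (hL2 : ∀ i, MemLp (X i) 2 ℙ)
    (hindep : iIndepFun X ℙ)
    (hmean : ∀ i, (∫ ω, X i ω ∂ℙ) = A / n)
    (hvar : ∀ i, variance (X i) ℙ =
      ((n : ℝ) - 1) * A ^ 2 / ((n : ℝ) ^ 2 * ((n : ℝ) + 1))) :
    ℙ {ω | (n : ℝ) ≤ ∑ i ∈ Finset.range k₀, X i ω ∨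
        d * A ≤ |((n : ℝ) / k) * ∑ i ∈ Finset.range k, X i ω - A|} ≤
      ENNReal.ofReal (2 * ε) := by
  have hn0 : (0 : ℝ) < n := Nat.cast_pos.2 (by omega)
  have ht0 : 0 < t := ht ▸ by positivity
  set p := t ^ ((1 : ℝ) / 3) with hp
  have hp0 : 0 < p := by positivity
  have hAp : A = n ^ 2 / p ^ 3 := by
    rw [hp, ← Real.rpow_mul_natCast ht0.le]
    norm_num [ht]
    field_simp
  rw [show (2 : ℝ) / 3 = 1 / 3 * (2 : ℕ) by norm_num, Real.rpow_mul_natCast ht0.le] at hk₀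
  have hk₀pos : 0 < k₀ := by exact_mod_cast hk₀ ▸ (by positivity : 0 < ε * p ^ 2)
  have hεp : 1 ≤ ε * p ^ 2 := hk₀ ▸ by exact_mod_cast hk₀pos
  have hσ : ∀ i, variance (X i) ℙ ≤ (A / n) ^ 2 := fun i => by
    rw [hvar, div_pow, div_le_div_iff₀ (by positivity) (by positivity)]
    nlinarith [sq_nonneg A]
  have hpair : Pairwise fun i j => IndepFun (X i) (X j) ℙ := fun i j hij => hindep.indepFun hij
  obtain ⟨hlt, hr₁⟩ := first_stage_bound hn0 hp0 hε0.le hAp hk₀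
    (one_le_mul_sub_of_one_le_mul_sq hε hp0 hεp)
  have hb₁ := meas_sum_range_ge_le hL2 hpair hmean hσ hlt
  have hb₂ := meas_abs_div_mul_sum_range_sub_ge_le hL2 hpair hn0.ne' hmean hσ
    (hk₀pos.trans_le hk) (δ := d * A) (by rw [hd]; positivity)
  have hr₂ := second_stage_bound (k := k) hn0.ne' hA0.ne' hp0.ne' hd hε0
    (hk₀ ▸ Nat.cast_le.2 hk)
  calc _ ≤ _ := measure_union_le _ _
    _ ≤ ENNReal.ofReal ε + ENNReal.ofReal ε :=
      add_le_add (hb₁.trans (ENNReal.ofReal_le_ofReal hr₁))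
        (hb₂.trans (ENNReal.ofReal_le_ofReal hr₂))
    _ = ENNReal.ofReal (2 * ε) := by rw [← ENNReal.ofReal_add hε0.le hε0.le, two_mul]

theorem adaptive_sampling_main_c_one
    {Ω : Type*} [MeasureSpace Ω] [IsProbabilityMeasure (ℙ : Measure Ω)]
    (n : ℕ) (hn : 2 ≤ n) (A : ℝ) (hA0 : 0 < A) (hA : A ≤ (n : ℝ) ^ 2)
    (t : ℝ) (ht : t = (n : ℝ) ^ 2 / A)
    (ε : ℝ) (hε0 : 0 < ε) (hε : ε < 1 / 2)
    (d : ℝ) (hd : d = 1 / (ε * t ^ ((1 : ℝ) / 3)))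
    (k₀ k : ℕ) (hk₀ : (k₀ : ℝ) = ε * t ^ ((2 : ℝ) / 3)) (hk : k₀ ≤ k)
    (X : ℕ → Ω → ℝ)
    (hmeas : ∀ i, Measurable (X i))
    (hL2 : ∀ i, MemLp (X i) 2 ℙ)
    (hindep : iIndepFun X ℙ)
    (hid : ∀ i j, IdentDistrib (X i) (X j) ℙ ℙ)
    (hmean : ∀ i, (∫ ω, X i ω ∂ℙ) = A / n)
    (hvar : ∀ i, variance (X i) ℙ =
      ((n : ℝ) - 1) * A ^ 2 / ((n : ℝ) ^ 2 * ((n : ℝ) + 1))) :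
    ℙ {ω | (n : ℝ) ≤ ∑ i ∈ Finset.range k₀, X i ω ∨
        d * A ≤ |((n : ℝ) / k) * ∑ i ∈ Finset.range k, X i ω - A|} ≤
      ENNReal.ofReal (2 * ε) :=
  adaptive_sampling_main_c_one_general n hn A hA0 t ht ε hε0 hε d hd k₀ k hk₀ hk X hL2 hindep hmean
    hvar
end

section
/- Let (Ω, ℱ, ℙ) be a probability space, let n ≥ 2 be an integer, and let A be a real number with 0 < A ≤ n². Let ε and c be real numbers with 0 < ε < c, and let k be a natural number with (k : ℝ) = ε·(n²(n−1)/A)^{2/3}. Let Y_1, …, Y_k be real-valued square-integrable random variables on Ω, each with mean E[Y_i] = A/(n(n−1)) and variance Var[Y_i] = (n(n−1)−1)·A²/(n²(n−1)²·(n(n−1)+1)). Then ℙ[ Σ_{i=1}^k Y_i ≥ c·n ] ≤ ε³/(c − ε)². -/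
open MeasureTheory ProbabilityTheory

/-! Write `x = n²(n-1)/A`, so that each `Y i` has mean `n / x` and `k³ = ε³ x²`. The sum then has
mean `k n / x`, whose cube is `ε³ n³ / x ≤ ε³ n³` because `x ≥ 1`. No independence is available,
but Cauchy–Schwarz applied pointwise to the centred summands still bounds the variance of the sum
by `k²` times the largest variance, and each variance is below the squared mean `(n / x)²`; the
identity `(k n / x)² k = ε³ n²` turns this into at most `ε³ n²`. Chebyshev's inequality at
distance `(c - ε) n` from the mean concludes. -/

section Chebyshev

variable {Ω : Type*} {mΩ : MeasurableSpace Ω} {μ : Measure Ω} [IsFiniteMeasure μ]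

lemma variance_sum_le_card_mul_sum {ι : Type*} [Fintype ι] {X : ι → Ω → ℝ}
    (hX : ∀ i, MemLp (X i) 2 μ) :
    Var[fun ω ↦ ∑ i, X i ω; μ] ≤ Fintype.card ι * ∑ i, Var[X i; μ] := by
  have hS : MemLp (fun ω ↦ ∑ i, X i ω) 2 μ := memLp_finsetSum _ fun i _ ↦ hX i
  have hsq : ∀ i, Integrable (fun ω ↦ (X i ω - μ[X i]) ^ 2) μ := fun i ↦
    ((hX i).sub (memLp_const _)).integrable_sq
  have hcentre : ∀ ω, ∑ i, X i ω - ∫ ω', ∑ i, X i ω' ∂μ = ∑ i, (X i ω - μ[X i]) := fun ω ↦ by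
    rw [integral_finsetSum _ fun i _ ↦ (hX i).integrable one_le_two, Finset.sum_sub_distrib]
  simp_rw [variance_eq_integral hS.aemeasurable, variance_eq_integral (hX _).aemeasurable,
    ← integral_finsetSum _ fun i _ ↦ hsq i, ← integral_const_mul]
  refine integral_mono (hS.sub (memLp_const _)).integrable_sq
    ((integrable_finsetSum _ fun i _ ↦ hsq i).const_mul _) fun ω ↦ ?_
  simpa only [hcentre, Finset.card_univ] using
    sq_sum_le_card_mul_sum_sq (s := Finset.univ) (f := fun i ↦ X i ω - μ[X i])

lemma measure_ge_le_variance_div_sq_of_integral_le {X : Ω → ℝ} (hX : MemLp X 2 μ) {m a : ℝ}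
    (hm : μ[X] ≤ m) (hma : m < a) :
    μ {ω | a ≤ X ω} ≤ ENNReal.ofReal (Var[X; μ] / (a - m) ^ 2) :=
  calc μ {ω | a ≤ X ω} ≤ μ {ω | a - m ≤ |X ω - μ[X]|} :=
        measure_mono fun ω (hω : a ≤ X ω) ↦ by
          show a - m ≤ |X ω - μ[X]|
          linarith [le_abs_self (X ω - μ[X])]
    _ ≤ _ := meas_ge_le_variance_div_sq hX (sub_pos.2 hma)

lemma measure_sum_ge_le {ι : Type*} [Fintype ι] {X : ι → Ω → ℝ} (hX : ∀ i, MemLp (X i) 2 μ)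
    {m v a : ℝ} (hmean : ∀ i, μ[X i] = m) (hvar : ∀ i, Var[X i; μ] ≤ v)
    (ha : Fintype.card ι * m < a) :
    μ {ω | a ≤ ∑ i, X i ω} ≤
      ENNReal.ofReal (Fintype.card ι ^ 2 * v / (a - Fintype.card ι * m) ^ 2) := by
  have hmean_sum : ∫ ω, ∑ i, X i ω ∂μ = Fintype.card ι * m := by
    simp [integral_finsetSum _ fun i _ ↦ (hX i).integrable one_le_two, hmean]
  have hvar_sum : Var[fun ω ↦ ∑ i, X i ω; μ] ≤ Fintype.card ι ^ 2 * v :=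
    calc Var[fun ω ↦ ∑ i, X i ω; μ] ≤ Fintype.card ι * ∑ i, Var[X i; μ] :=
          variance_sum_le_card_mul_sum hX
      _ ≤ Fintype.card ι * ∑ _i : ι, v := by gcongr with i; exact hvar i
      _ = Fintype.card ι ^ 2 * v := by
          simp only [Finset.sum_const, Finset.card_univ, nsmul_eq_mul]; ring
  calc μ {ω | a ≤ ∑ i, X i ω}
      ≤ ENNReal.ofReal (Var[fun ω ↦ ∑ i, X i ω; μ] / (a - Fintype.card ι * m) ^ 2) :=
        measure_ge_le_variance_div_sq_of_integral_le (memLp_finsetSum _ fun i _ ↦ hX i)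
          hmean_sum.le ha
    _ ≤ _ := by gcongr

end Chebyshev

lemma pow_three_eq_of_eq_mul_rpow {k ε x : ℝ} (hx : 0 ≤ x) (hk : k = ε * x ^ ((2 : ℝ) / 3)) :
    k ^ 3 = ε ^ 3 * x ^ 2 := by
  rw [hk, mul_pow, ← Real.rpow_natCast (x ^ _), ← Real.rpow_mul hx]
  norm_num

lemma mul_div_le_of_pow_three_eq {k ε x n : ℝ} (hk3 : k ^ 3 = ε ^ 3 * x ^ 2) (hε : 0 ≤ ε)
    (hx : 1 ≤ x) (hn : 0 ≤ n) :
    k * (n / x) ≤ ε * n := by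
  refine le_of_pow_le_pow_left₀ three_ne_zero (by positivity) ?_
  calc (k * (n / x)) ^ 3 = ε ^ 3 * n ^ 3 / x := by
        rw [mul_pow, div_pow, hk3]; field_simp
    _ ≤ ε ^ 3 * n ^ 3 := div_le_self (by positivity) hx
    _ = (ε * n) ^ 3 := (mul_pow ..).symm

lemma sq_mul_div_le_of_pow_three_eq {k ε x n : ℝ} (hk3 : k ^ 3 = ε ^ 3 * x ^ 2)
    (hk : k = 0 ∨ 1 ≤ k) (hx : 0 < x) :
    (k * (n / x)) ^ 2 ≤ ε ^ 3 * n ^ 2 := by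
  have hcube : (k * (n / x)) ^ 2 * k = ε ^ 3 * n ^ 2 :=
    calc (k * (n / x)) ^ 2 * k = k ^ 3 * n ^ 2 / x ^ 2 := by ring
      _ = ε ^ 3 * n ^ 2 := by rw [hk3]; field_simp
  rcases hk with rfl | hk
  · rw [← hcube]; simp
  · exact hcube ▸ le_mul_of_one_le_right (sq_nonneg _) hk

lemma sq_div_sq_sub_le {m ε c n : ℝ} (hm : m ≤ ε * n) (hsq : m ^ 2 ≤ ε ^ 3 * n ^ 2)
    (hεc : ε < c) (hn : 0 < n) :
    m ^ 2 / (c * n - m) ^ 2 ≤ ε ^ 3 / (c - ε) ^ 2 := by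
  have hcε : 0 < c - ε := sub_pos.2 hεc
  calc m ^ 2 / (c * n - m) ^ 2 ≤ ε ^ 3 * n ^ 2 / ((c - ε) * n) ^ 2 :=
        div_le_div₀ ((sq_nonneg m).trans hsq) hsq (by positivity)
          (pow_le_pow_left₀ (by positivity) (by linarith) 2)
    _ = ε ^ 3 / (c - ε) ^ 2 := by field_simp

theorem early_termination_probability_pairs_general
    {Ω : Type*} [MeasureSpace Ω] [IsProbabilityMeasure (ℙ : Measure Ω)]
    (n : ℕ) (hn : 2 ≤ n) (A : ℝ) (hA0 : 0 < A) (hA : A ≤ (n : ℝ) ^ 2)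
    (ε c : ℝ) (hε : 0 < ε) (hεc : ε < c)
    (k : ℕ) (hk : (k : ℝ) = ε * ((n : ℝ) ^ 2 * ((n : ℝ) - 1) / A) ^ ((2 : ℝ) / 3))
    (Y : Fin k → Ω → ℝ)
    (hL2 : ∀ i, MemLp (Y i) 2 ℙ)
    (hmean : ∀ i, (∫ ω, Y i ω ∂ℙ) = A / ((n : ℝ) * ((n : ℝ) - 1)))
    (hvar : ∀ i, variance (Y i) ℙ =
      ((n : ℝ) * ((n : ℝ) - 1) - 1) * A ^ 2 /
        ((n : ℝ) ^ 2 * ((n : ℝ) - 1) ^ 2 * ((n : ℝ) * ((n : ℝ) - 1) + 1))) :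
    ℙ {ω | c * n ≤ ∑ i, Y i ω} ≤ ENNReal.ofReal (ε ^ 3 / (c - ε) ^ 2) := by
  have hn1 : (1 : ℝ) ≤ n - 1 := by
    have : (2 : ℝ) ≤ n := by exact_mod_cast hn
    linarith
  set x : ℝ := (n : ℝ) ^ 2 * (n - 1) / A with hx
  have hx1 : 1 ≤ x := by rw [hx, le_div_iff₀ hA0]; nlinarith
  have hmean_eq : A / (n * (n - 1)) = n / x := by rw [hx]; field_simp
  have hk3 : (k : ℝ) ^ 3 = ε ^ 3 * x ^ 2 := pow_three_eq_of_eq_mul_rpow (by positivity) hk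
  have hsum_mean : k * (n / x) ≤ ε * n :=
    mul_div_le_of_pow_three_eq hk3 hε.le hx1 n.cast_nonneg
  have hsum_var : (k * (n / x)) ^ 2 ≤ ε ^ 3 * n ^ 2 :=
    sq_mul_div_le_of_pow_three_eq hk3 (by rcases k with _ | k <;> simp) (by positivity)
  have hvar_le : ∀ i, variance (Y i) ℙ ≤ (n / x) ^ 2 := fun i ↦ by
    rw [hvar i, ← hmean_eq, div_pow, div_le_div_iff₀ (by positivity) (by positivity)]
    nlinarith [sq_nonneg A, mul_pos (by positivity : (0 : ℝ) < n) (by linarith : (0 : ℝ) < n - 1)]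
  calc ℙ {ω | c * n ≤ ∑ i, Y i ω}
      ≤ ENNReal.ofReal ((k : ℝ) ^ 2 * (n / x) ^ 2 / (c * n - k * (n / x)) ^ 2) := by
        simpa only [Fintype.card_fin] using measure_sum_ge_le hL2
          (fun i ↦ (hmean i).trans hmean_eq) hvar_le
          (by simpa only [Fintype.card_fin] using
            hsum_mean.trans_lt (mul_lt_mul_of_pos_right hεc (by positivity)))
    _ ≤ ENNReal.ofReal (ε ^ 3 / (c - ε) ^ 2) := by
        rw [← mul_pow]
        exact ENNReal.ofReal_le_ofReal (sq_div_sq_sub_le hsum_mean hsum_var hεc (by positivity))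

theorem early_termination_probability_pairs
    {Ω : Type*} [MeasureSpace Ω] [IsProbabilityMeasure (ℙ : Measure Ω)]
    (n : ℕ) (hn : 2 ≤ n) (A : ℝ) (hA0 : 0 < A) (hA : A ≤ (n : ℝ) ^ 2)
    (ε c : ℝ) (hε : 0 < ε) (hεc : ε < c)
    (k : ℕ) (hk : (k : ℝ) = ε * ((n : ℝ) ^ 2 * ((n : ℝ) - 1) / A) ^ ((2 : ℝ) / 3))
    (Y : Fin k → Ω → ℝ)
    (hmeas : ∀ i, Measurable (Y i))
    (hL2 : ∀ i, MemLp (Y i) 2 ℙ)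
    (hmean : ∀ i, (∫ ω, Y i ω ∂ℙ) = A / ((n : ℝ) * ((n : ℝ) - 1)))
    (hvar : ∀ i, variance (Y i) ℙ =
      ((n : ℝ) * ((n : ℝ) - 1) - 1) * A ^ 2 /
        ((n : ℝ) ^ 2 * ((n : ℝ) - 1) ^ 2 * ((n : ℝ) * ((n : ℝ) - 1) + 1))) :
    ℙ {ω | c * n ≤ ∑ i, Y i ω} ≤ ENNReal.ofReal (ε ^ 3 / (c - ε) ^ 2) :=
  early_termination_probability_pairs_general n hn A hA0 hA ε c hε hεc k hk Y hL2 hmean hvar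
end

section
/- Let (Ω, ℱ, ℙ) be a probability space, let n ≥ 2 be an integer, and let A be a real number with 0 < A ≤ n². Let ε > 0 and d > 0 be real numbers, and let k be a natural number with (k : ℝ) ≥ ε·(n²(n−1)/A)^{2/3}. Let Y_1, …, Y_k be independent identically distributed square-integrable real-valued random variables on Ω, each with mean E[Y_i] = A/(n(n−1)) and variance Var[Y_i] = (n(n−1)−1)·A²/(n²(n−1)²·(n(n−1)+1)). Then ℙ[ |(n(n−1)/k)·Σ_{i=1}^k Y_i − A| ≥ d·A ] ≤ (1/(ε d²))·(A/(n²(n−1)))^{2/3}. -/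
/-!
Chebyshev's inequality applied to the sample mean of the `Y i`. Under the random-division model
the variance of a single `Y i` is at most the square of its mean `A / (n (n - 1))`, so the
relative error `d` is exceeded with probability at most `1 / (k d²)`, and the lower bound on
the sample size `k` turns this into the stated bound.
-/

open MeasureTheory ProbabilityTheory

section Chebyshev

variable {Ω ι : Type*} [MeasurableSpace Ω] {μ : Measure Ω} [IsFiniteMeasure μ]
  [Fintype ι] {Y : ι → Ω → ℝ} {m σ2 t : ℝ}

lemma meas_le_abs_sum_sub_le (hL2 : ∀ i, MemLp (Y i) 2 μ)
    (hindep : Pairwise fun i j ↦ Y i ⟂ᵢ[μ] Y j) (hmean : ∀ i, μ[Y i] = m)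
    (hvar : ∀ i, variance (Y i) μ ≤ σ2) (ht : 0 < t) :
    μ {ω | t ≤ |∑ i, Y i ω - Fintype.card ι * m|} ≤
      ENNReal.ofReal (Fintype.card ι * σ2 / t ^ 2) := by
  have hsum : MemLp (∑ i, Y i) 2 μ := memLp_finsetSum' _ fun i _ ↦ hL2 i
  have hES : μ[∑ i, Y i] = Fintype.card ι * m := by
    simp only [Finset.sum_apply]
    rw [integral_finsetSum _ fun i _ ↦ (hL2 i).integrable one_le_two]
    simp [hmean]
  have hVS : variance (∑ i, Y i) μ ≤ Fintype.card ι * σ2 := by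
    rw [IndepFun.variance_sum (fun i _ ↦ hL2 i) fun i _ j _ hij ↦ hindep hij]
    simpa using Finset.sum_le_sum fun i (_ : i ∈ Finset.univ) ↦ hvar i
  calc μ {ω | t ≤ |∑ i, Y i ω - Fintype.card ι * m|}
      = μ {ω | t ≤ |(∑ i, Y i) ω - μ[∑ i, Y i]|} := by
        rw [hES]; simp only [Finset.sum_apply]
    _ ≤ ENNReal.ofReal (variance (∑ i, Y i) μ / t ^ 2) := meas_ge_le_variance_div_sq hsum ht
    _ ≤ _ := ENNReal.ofReal_le_ofReal (by gcongr)

lemma meas_le_abs_sampleMean_sub_le [Nonempty ι] (hL2 : ∀ i, MemLp (Y i) 2 μ)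
    (hindep : Pairwise fun i j ↦ Y i ⟂ᵢ[μ] Y j) (hmean : ∀ i, μ[Y i] = m)
    (hvar : ∀ i, variance (Y i) μ ≤ σ2) (ht : 0 < t) :
    μ {ω | t ≤ |(∑ i, Y i ω) / Fintype.card ι - m|} ≤
      ENNReal.ofReal (σ2 / (Fintype.card ι * t ^ 2)) := by
  have hcard : (0 : ℝ) < Fintype.card ι := by exact_mod_cast Fintype.card_pos
  have hevent : ∀ ω, (t ≤ |(∑ i, Y i ω) / Fintype.card ι - m|) ↔
      (Fintype.card ι * t ≤ |∑ i, Y i ω - Fintype.card ι * m|) := by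
    intro ω
    have : ∑ i, Y i ω - Fintype.card ι * m =
        Fintype.card ι * ((∑ i, Y i ω) / Fintype.card ι - m) := by
      field_simp
    rw [this, abs_mul, abs_of_pos hcard, mul_le_mul_iff_right₀ hcard]
  calc μ {ω | t ≤ |(∑ i, Y i ω) / Fintype.card ι - m|}
      = μ {ω | Fintype.card ι * t ≤ |∑ i, Y i ω - Fintype.card ι * m|} := by
        simp only [hevent]
    _ ≤ ENNReal.ofReal (Fintype.card ι * σ2 / (Fintype.card ι * t) ^ 2) :=
        meas_le_abs_sum_sub_le hL2 hindep hmean hvar (by positivity)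
    _ = ENNReal.ofReal (σ2 / (Fintype.card ι * t ^ 2)) := by
        congr 1; field_simp

end Chebyshev

lemma le_abs_mul_sub_iff {c t x b : ℝ} (hc : 0 < c) :
    t ≤ |c * x - b| ↔ t / c ≤ |x - b / c| := by
  have : c * x - b = c * (x - b / c) := by field_simp
  rw [this, abs_mul, abs_of_pos hc, div_le_iff₀ hc, mul_comm]

lemma pairVariance_le_sq_mean {n : ℝ} (hn : 1 < n) (A : ℝ) :
    (n * (n - 1) - 1) * A ^ 2 / (n ^ 2 * (n - 1) ^ 2 * (n * (n - 1) + 1)) ≤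
      (A / (n * (n - 1))) ^ 2 := by
  have hc : 0 < n * (n - 1) := mul_pos (by linarith) (by linarith)
  rw [div_pow, show n ^ 2 * (n - 1) ^ 2 = (n * (n - 1)) ^ 2 by ring]
  rw [div_le_div_iff₀ (by positivity) (by positivity)]
  nlinarith [sq_nonneg A, sq_nonneg (n * (n - 1))]

lemma one_div_le_rpow_div_of_mul_inv_rpow_le {x ε k p : ℝ} (hx : 0 < x) (hε : 0 < ε)
    (hk : ε * x⁻¹ ^ p ≤ k) : 1 / k ≤ x ^ p / ε := by
  rw [Real.inv_rpow hx.le] at hk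
  have hxp : 0 < x ^ p := Real.rpow_pos_of_pos hx p
  have hkpos : 0 < k := lt_of_lt_of_le (by positivity) hk
  rw [div_le_div_iff₀ hkpos hε]
  rw [← div_eq_mul_inv, div_le_iff₀ hxp] at hk
  linarith

theorem estimation_failure_probability_pairs_general
    {Ω : Type*} [MeasureSpace Ω] [IsProbabilityMeasure (ℙ : Measure Ω)]
    (n : ℕ) (hn : 2 ≤ n) (A : ℝ) (hA0 : 0 < A)
    (ε d : ℝ) (hε : 0 < ε) (hd : 0 < d)
    (k : ℕ) (hk : ε * ((n : ℝ) ^ 2 * ((n : ℝ) - 1) / A) ^ ((2 : ℝ) / 3) ≤ (k : ℝ))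
    (Y : Fin k → Ω → ℝ)
    (hL2 : ∀ i, MemLp (Y i) 2 ℙ)
    (hindep : iIndepFun Y ℙ)
    (hmean : ∀ i, (∫ ω, Y i ω ∂ℙ) = A / ((n : ℝ) * ((n : ℝ) - 1)))
    (hvar : ∀ i, variance (Y i) ℙ =
      ((n : ℝ) * ((n : ℝ) - 1) - 1) * A ^ 2 /
        ((n : ℝ) ^ 2 * ((n : ℝ) - 1) ^ 2 * ((n : ℝ) * ((n : ℝ) - 1) + 1))) :
    ℙ {ω | d * A ≤ |((n : ℝ) * ((n : ℝ) - 1) / k) * ∑ i, Y i ω - A|} ≤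
      ENNReal.ofReal (1 / (ε * d ^ 2) *
        (A / ((n : ℝ) ^ 2 * ((n : ℝ) - 1))) ^ ((2 : ℝ) / 3)) := by
  have hn1 : (1 : ℝ) < n := by exact_mod_cast hn
  set c : ℝ := n * (n - 1)
  have hc : 0 < c := mul_pos (by linarith) (by linarith)
  have hsize : 1 / (k : ℝ) ≤ (A / (n ^ 2 * (n - 1))) ^ ((2 : ℝ) / 3) / ε :=
    one_div_le_rpow_div_of_mul_inv_rpow_le (div_pos hA0 (by nlinarith)) hε (by rwa [inv_div])
  have hk0 : 0 < (k : ℝ) := lt_of_lt_of_le (by positivity) hk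
  have : Nonempty (Fin k) := ⟨⟨0, by exact_mod_cast hk0⟩⟩
  have hevent : ∀ ω, d * A ≤ |c / k * ∑ i, Y i ω - A| ↔
      d * (A / c) ≤ |(∑ i, Y i ω) / k - A / c| := by
    intro ω
    rw [mul_comm (c / k), ← mul_div_assoc, mul_comm _ c, mul_div_assoc, le_abs_mul_sub_iff hc,
      mul_div_assoc]
  calc ℙ {ω | d * A ≤ |c / k * ∑ i, Y i ω - A|}
      = ℙ {ω | d * (A / c) ≤ |(∑ i, Y i ω) / Fintype.card (Fin k) - A / c|} := by
        simp only [hevent, Fintype.card_fin]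
    _ ≤ ENNReal.ofReal ((A / c) ^ 2 / (Fintype.card (Fin k) * (d * (A / c)) ^ 2)) :=
        meas_le_abs_sampleMean_sub_le hL2 (fun i j hij ↦ hindep.indepFun hij) hmean
          (fun i ↦ (hvar i).trans_le (pairVariance_le_sq_mean hn1 A)) (by positivity)
    _ = ENNReal.ofReal (1 / k / d ^ 2) := by
        rw [Fintype.card_fin]; congr 1; field_simp
    _ ≤ _ := ENNReal.ofReal_le_ofReal (by rw [one_div_mul_eq_div, ← div_div]; gcongr)

theorem estimation_failure_probability_pairs
    {Ω : Type*} [MeasureSpace Ω] [IsProbabilityMeasure (ℙ : Measure Ω)]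
    (n : ℕ) (hn : 2 ≤ n) (A : ℝ) (hA0 : 0 < A) (hA : A ≤ (n : ℝ) ^ 2)
    (ε d : ℝ) (hε : 0 < ε) (hd : 0 < d)
    (k : ℕ) (hk : ε * ((n : ℝ) ^ 2 * ((n : ℝ) - 1) / A) ^ ((2 : ℝ) / 3) ≤ (k : ℝ))
    (Y : Fin k → Ω → ℝ)
    (hmeas : ∀ i, Measurable (Y i))
    (hL2 : ∀ i, MemLp (Y i) 2 ℙ)
    (hindep : iIndepFun Y ℙ)
    (hid : ∀ i j, IdentDistrib (Y i) (Y j) ℙ ℙ)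
    (hmean : ∀ i, (∫ ω, Y i ω ∂ℙ) = A / ((n : ℝ) * ((n : ℝ) - 1)))
    (hvar : ∀ i, variance (Y i) ℙ =
      ((n : ℝ) * ((n : ℝ) - 1) - 1) * A ^ 2 /
        ((n : ℝ) ^ 2 * ((n : ℝ) - 1) ^ 2 * ((n : ℝ) * ((n : ℝ) - 1) + 1))) :
    ℙ {ω | d * A ≤ |((n : ℝ) * ((n : ℝ) - 1) / k) * ∑ i, Y i ω - A|} ≤
      ENNReal.ofReal (1 / (ε * d ^ 2) *
        (A / ((n : ℝ) ^ 2 * ((n : ℝ) - 1))) ^ ((2 : ℝ) / 3)) :=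
  estimation_failure_probability_pairs_general n hn A hA0 ε d hε hd k hk Y hL2 hindep hmean hvar
end
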